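/- arXiv:2402.07042 — 2 statements merged into one kernel-verified Lean document; each statement's English description precedes it below -/
import Mathlib

section
/- In a P-algebra, complementation is antitone: x ≤ y if and only if y' ≤ x'. -/
structure PAlgebra (X : Type*) where
  zero : X
  compl : X → X
  mul : X → X → X
  le_refl : ∀ x, mul x x = x
  le_antisymm : ∀ x y, mul x y = x → mul y x = y → x = y
  le_trans : ∀ x y z, mul x y = x → mul y z = y → mul x z = x
  smile_symm : ∀ x y, mul (mul x y) x = mul x y → mul (mul y x) y = mul y x
  assoc_zero : ∀ x y z, mul (mul x y) z = zero ↔ mul (mul z y) x = zero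
  assoc_left : ∀ x y z, mul x y = x → mul (mul x y) z = mul x (mul y z)
  assoc_right : ∀ x y z, mul x y = x → mul (mul z y) x = mul z (mul y x)
  mul_mono : ∀ x y z, mul x y = x → mul (mul x z) (mul y z) = mul x z
  mul_le_right : ∀ x y, mul (mul x y) y = mul x y
  zero_mul : ∀ x, mul zero x = zero
  mul_compl : ∀ x, mul x (compl x) = zero
  superpos : ∀ x y z, mul (mul x y) z = mul x y →
    mul (mul x (compl y)) z = mul x (compl y) → mul x z = x

namespace PAlgebra

variable {X : Type*}

/-- x ≤ y iff x·y = x. -/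
def le (P : PAlgebra X) (x y : X) : Prop := P.mul x y = x

/-- x ⌣ y iff x·y ≤ x. -/
def smile (P : PAlgebra X) (x y : X) : Prop := P.le (P.mul x y) x

/-- 1 := 0'. -/
def one (P : PAlgebra X) : X := P.compl P.zero

/-- x + y := (y'·x')'. -/
def plus (P : PAlgebra X) (x y : X) : X := P.compl (P.mul (P.compl y) (P.compl x))

end PAlgebra
lemma PAlgebra.mul_zero {X : Type*} (P : PAlgebra X) (x : X) : P.mul x P.zero = P.zero :=
  P.le_antisymm _ _ (P.mul_le_right x P.zero) (P.zero_mul _)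

-- x ≤ y → x · y' = 0
lemma PAlgebra.le_mul_compl {X : Type*} (P : PAlgebra X) (x y : X) (h : P.mul x y = x) :
    P.mul x (P.compl y) = P.zero := by
  have := P.assoc_left x y (P.compl y) h
  rw [h, P.mul_compl, P.mul_zero] at this
  exact this

-- x · y' = 0 → y' · x = 0
lemma PAlgebra.zero_flip {X : Type*} (P : PAlgebra X) (x z : X) (h : P.mul x z = P.zero) :
    P.mul z x = P.zero := by
  have h1 : P.mul (P.mul x x) z = P.zero := by rw [P.le_refl]; exact h
  have h2 := (P.assoc_zero x x z).mp h1
  -- (z·x)·x = 0, and (z·x)·x = z·x by mul_le_right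
  rw [P.mul_le_right] at h2
  exact h2

-- main direction: x ≤ y → y' ≤ x'
lemma PAlgebra.compl_antitone {X : Type*} (P : PAlgebra X) (x y : X) (h : P.mul x y = x) :
    P.mul (P.compl y) (P.compl x) = P.compl y := by
  have h1 : P.mul x (P.compl y) = P.zero := P.le_mul_compl x y h
  have h2 : P.mul (P.compl y) x = P.zero := P.zero_flip x (P.compl y) h1
  apply P.superpos (P.compl y) x (P.compl x)
  · rw [h2, P.zero_mul]
  · exact P.mul_le_right _ _

lemma PAlgebra.compl_compl {X : Type*} (P : PAlgebra X) (x : X) :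
    P.compl (P.compl x) = x := by
  set x' := P.compl x
  set x'' := P.compl x'
  have hle : P.mul x x'' = x := by
    apply P.superpos x x' x''
    · rw [P.mul_compl, P.zero_mul]
    · exact P.mul_le_right _ _
  have hzx : P.mul x'' x' = P.zero := P.zero_flip x' x'' (P.mul_compl x')
  have hge : P.mul x'' x = x'' := by
    apply P.superpos x'' x x
    · exact P.mul_le_right _ _
    · rw [hzx, P.zero_mul]
  exact P.le_antisymm x'' x hge hle

theorem stmt8 {X : Type*} (P : PAlgebra X) (x y : X) :
    P.le x y ↔ P.le (P.compl y) (P.compl x) := by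
  constructor
  · exact P.compl_antitone x y
  · intro h
    have h2 := P.compl_antitone _ _ h
    rw [P.compl_compl, P.compl_compl] at h2
    exact h2
end

section
/- In a P-algebra, if x ⌣ y then x + y = y + x and x + y is the least upper bound of x and y. -/
namespace PAlgebra
variable {X : Type*} (P : PAlgebra X)

lemma mul_zero' (x : X) : P.mul x P.zero = P.zero :=
  P.le_antisymm _ _ (P.mul_le_right x P.zero) (P.zero_mul _)

lemma mul_one' (x : X) : P.mul x (P.compl P.zero) = x := by
  apply P.superpos x P.zero
  · rw [P.mul_zero', P.zero_mul]
  · exact P.mul_le_right _ _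

lemma comm_zero {x y : X} (h : P.mul x y = P.zero) : P.mul y x = P.zero := by
  have := (P.assoc_zero x (P.compl P.zero) y).mp
  rw [P.mul_one', P.mul_one'] at this
  exact this h

lemma x_mul_compl_compl (x : X) : P.mul x (P.compl (P.compl x)) = x := by
  apply P.superpos x (P.compl x)
  · rw [P.mul_compl, P.zero_mul]
  · exact P.mul_le_right _ _

lemma double_compl (x : X) : P.compl (P.compl x) = x := by
  apply P.le_antisymm
  · apply P.superpos _ x
    · exact P.mul_le_right _ _
    · rw [P.comm_zero (P.mul_compl (P.compl x)), P.zero_mul]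
  · exact P.x_mul_compl_compl x

lemma le_mul_of_le_le {c d e : X} (h1 : P.mul c d = c) (h2 : P.mul c e = c) :
    P.mul c (P.mul d e) = c := by
  have := P.assoc_left c d e h1
  rw [h1, h2] at this
  exact this.symm

lemma mul_compl_of_le {x y : X} (h : P.mul x y = x) : P.mul x (P.compl y) = P.zero := by
  have := P.assoc_left x y (P.compl y) h
  rw [h, P.mul_compl, P.mul_zero'] at this
  exact this

lemma antitone {x y : X} (h : P.mul x y = x) :
    P.mul (P.compl y) (P.compl x) = P.compl y := by
  apply P.superpos _ x
  · rw [P.comm_zero (P.mul_compl_of_le h), P.zero_mul]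
  · exact P.mul_le_right _ _

/-- x ⌣ y → y' ⌣ x -/
lemma smile_compl_left {x y : X} (h : P.smile x y) : P.smile (P.compl y) x := by
  have hs := P.smile_symm x y h
  have h1 : P.mul (P.mul y x) (P.compl y) = P.zero := P.mul_compl_of_le hs
  have h2 : P.mul (P.mul (P.compl y) x) y = P.zero := (P.assoc_zero y x (P.compl y)).mp h1
  show P.mul (P.mul (P.compl y) x) (P.compl y) = P.mul (P.compl y) x
  apply P.superpos _ y
  · rw [h2, P.zero_mul]
  · exact P.mul_le_right _ _

lemma smile_compl_right {x y : X} (h : P.smile x y) : P.smile x (P.compl y) :=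
  P.smile_symm _ _ (P.smile_compl_left h)

lemma key {x y : X} (h : P.smile x y) :
    P.mul y (P.mul (P.compl y) (P.compl x)) = P.zero := by
  have h1 : P.smile y (P.compl x) := P.smile_compl_right (P.smile_symm _ _ h)
  have h2 : P.mul (P.mul y (P.compl x)) (P.compl y) = P.zero := by
    have := P.assoc_left (P.mul y (P.compl x)) y (P.compl y) h1
    rw [h1, P.mul_compl, P.mul_zero'] at this
    exact this
  have h3 : P.mul (P.mul (P.compl y) (P.compl x)) y = P.zero :=
    (P.assoc_zero y (P.compl x) (P.compl y)).mp h2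
  exact P.comm_zero h3

lemma x_le_plus (x y : X) : P.le x (P.plus x y) := by
  have ha : P.mul (P.mul (P.compl y) (P.compl x)) (P.compl x) =
      P.mul (P.compl y) (P.compl x) := P.mul_le_right _ _
  have := P.antitone ha
  rw [P.double_compl] at this
  exact this

lemma y_le_plus {x y : X} (h : P.smile x y) : P.le y (P.plus x y) := by
  apply P.superpos y (P.mul (P.compl y) (P.compl x))
  · rw [P.key h, P.zero_mul]
  · exact P.mul_le_right y (P.compl (P.mul (P.compl y) (P.compl x)))

lemma plus_lub {x y w : X} (hx : P.le x w) (hy : P.le y w) : P.le (P.plus x y) w := by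
  have h3 : P.mul (P.compl w) (P.mul (P.compl y) (P.compl x)) = P.compl w :=
    P.le_mul_of_le_le (P.antitone hy) (P.antitone hx)
  have := P.antitone h3
  rw [P.double_compl] at this
  exact this

end PAlgebra

theorem stmt14 {X : Type*} (P : PAlgebra X) (x y : X) (h : P.smile x y) :
    P.plus x y = P.plus y x ∧
    P.le x (P.plus x y) ∧ P.le y (P.plus x y) ∧
    ∀ w, P.le x w → P.le y w → P.le (P.plus x y) w := by
  have hs : P.smile y x := P.smile_symm _ _ h
  refine ⟨?_, P.x_le_plus x y, P.y_le_plus h, fun w hx hy => P.plus_lub hx hy⟩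
  exact P.le_antisymm _ _
    (P.plus_lub (P.y_le_plus hs) (P.x_le_plus y x))
    (P.plus_lub (P.y_le_plus h) (P.x_le_plus x y))
end
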